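/- arXiv:2406.13311 — 2 statements merged into one kernel-verified Lean document; each statement's English description precedes it below -/
import Mathlib

section
/- Let λ > 0 and let h, g be analytic on 𝔻 with h(0) = 0, h'(0) = 1, g(0) = 0, g'(0) = 0. If for every ζ ∈ ℂ with |ζ| = 1 and every z ∈ 𝔻 one has |z²·(h''(z) + ζ·g''(z)) + z·(h'(z) + ζ·g'(z)) − (h(z) + ζ·g(z))| ≤ 3λ, then the harmonic function f = h + conj∘g belongs to Ω_H^0(λ). -/
open Complex Metric Set Filter Topology

noncomputable section

/-- The open unit disk in the complex plane. -/
def unitDisk : Set ℂ := {z : ℂ | ‖z‖ < 1}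

/-- The class `Ω_H^0(λ)` of harmonic mappings `f = h + conj ∘ g`. -/
def OmegaH0 (lam : ℝ) (h g : ℂ → ℂ) : Prop :=
  AnalyticOnNhd ℂ h unitDisk ∧ AnalyticOnNhd ℂ g unitDisk ∧
    h 0 = 0 ∧ deriv h 0 = 1 ∧ g 0 = 0 ∧ deriv g 0 = 0 ∧
    ∀ z ∈ unitDisk,
      ‖h z - z * deriv h z‖ < lam - ‖g z - z * deriv g z‖



lemma schwarz2 {E : ℂ → ℂ} {M : ℝ}
    (hd : DifferentiableOn ℂ E (ball (0:ℂ) 1))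
    (hb : ∀ w ∈ ball (0:ℂ) 1, ‖E w‖ ≤ M)
    (h0 : E 0 = 0) (h1 : deriv E 0 = 0) {z : ℂ} (hz : z ∈ ball (0:ℂ) 1) :
    ‖E z‖ ≤ M * ‖z‖ ^ 2 := by
  have hmem : ball (0:ℂ) 1 ∈ 𝓝 (0:ℂ) := ball_mem_nhds _ one_pos
  set E₂ : ℂ → ℂ := dslope (dslope E 0) 0 with hE₂
  have hd2 : DifferentiableOn ℂ E₂ (ball (0:ℂ) 1) :=
    (differentiableOn_dslope hmem).mpr ((differentiableOn_dslope hmem).mpr hd)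
  have hE₂val : ∀ w : ℂ, w ≠ 0 → E₂ w = E w / w ^ 2 := by
    intro w hw
    rw [hE₂, dslope_of_ne _ hw, slope_def_field, dslope_of_ne _ hw, slope_def_field,
      dslope_same]
    rw [h0, h1]
    simp [div_div, pow_two]
  have key : ∀ w ∈ ball (0:ℂ) 1, ‖E₂ w‖ ≤ M := by
    intro w hw
    suffices H : ∀ᶠ r in 𝓝[<] (1:ℝ), ‖E₂ w‖ ≤ M / r ^ 2 by
      refine ge_of_tendsto ?_ H
      have : Tendsto (fun r : ℝ => M / r ^ 2) (𝓝[<] (1:ℝ)) (𝓝 (M / 1 ^ 2)) :=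
        (tendsto_const_nhds.div ((continuous_pow 2).tendsto 1) (by norm_num)).mono_left
          nhdsWithin_le_nhds
      simpa using this
    rw [mem_ball, dist_zero_right] at hw
    filter_upwards [Ioo_mem_nhdsLT_of_mem ⟨hw, le_rfl⟩] with r hr
    have hr₀ : (0:ℝ) < r := lt_of_le_of_lt (norm_nonneg w) hr.1
    have hd' : DiffContOnCl ℂ E₂ (ball (0:ℂ) r) := by
      refine DifferentiableOn.diffContOnCl ?_
      rw [closure_ball (0:ℂ) hr₀.ne']
      exact hd2.mono (closedBall_subset_ball hr.2)
    refine norm_le_of_forall_mem_frontier_norm_le isBounded_ball hd' ?_ ?_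
    · rw [frontier_ball (0:ℂ) hr₀.ne']
      intro x hx
      have hxr : ‖x‖ = r := by simpa [Complex.dist_eq] using mem_sphere_iff_norm.1 hx
      have hx0 : x ≠ 0 := by
        intro hx0; rw [hx0] at hxr; simp at hxr; exact hr₀.ne' hxr.symm
      rw [hE₂val x hx0]
      have hxb : x ∈ ball (0:ℂ) 1 := by
        rw [mem_ball, dist_zero_right]; show ‖x‖ < 1; rw [hxr]; exact hr.2
      have := hb x hxb
      rw [show ‖E x / x ^ 2‖ = ‖E x‖ / r ^ 2 by
        rw [norm_div, norm_pow]; simp [hxr]]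
      exact div_le_div_of_nonneg_right this (by positivity) |>.trans_eq rfl
    · rw [closure_ball (0:ℂ) hr₀.ne', mem_closedBall, dist_zero_right]
      exact hr.1.le
  rcases eq_or_ne z 0 with rfl | hz0
  · simp [h0]
  · have : E z = z ^ 2 * E₂ z := by rw [hE₂val z hz0]; field_simp
    rw [this, norm_mul, norm_pow]
    calc ‖z‖ ^ 2 * ‖E₂ z‖ ≤ ‖z‖ ^ 2 * M :=
          mul_le_mul_of_nonneg_left (key z hz) (by positivity)
      _ = M * ‖z‖ ^ 2 := mul_comm _ _

lemma unitDisk_eq' : {z : ℂ | ‖z‖ < 1} = ball (0:ℂ) 1 := by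
  ext z; simp [Complex.dist_eq]

lemma keybound (lam : ℝ) (h g : ℂ → ℂ)
    (hh : AnalyticOnNhd ℂ h {z : ℂ | ‖z‖ < 1})
    (hg : AnalyticOnNhd ℂ g {z : ℂ | ‖z‖ < 1})
    (h0 : h 0 = 0) (g0 : g 0 = 0) (ζ : ℂ)
    (hbd : ∀ z ∈ {z : ℂ | ‖z‖ < 1},
      ‖z ^ 2 * (deriv (deriv h) z + ζ * deriv (deriv g) z) +
        z * (deriv h z + ζ * deriv g z) - (h z + ζ * g z)‖ ≤ 3 * lam)
    (z : ℂ) (hz : z ∈ {z : ℂ | ‖z‖ < 1}) :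
    ‖(h z - z * deriv h z) + ζ * (g z - z * deriv g z)‖
      ≤ lam * ‖z‖ ^ 2 := by
  set s : Set ℂ := {z : ℂ | ‖z‖ < 1} with hs
  have hsball : s = ball (0:ℂ) 1 := unitDisk_eq'
  have h0s : (0:ℂ) ∈ s := by simp [hs]
  have hh1 : AnalyticOnNhd ℂ (deriv h) s := hh.deriv
  have hh2 : AnalyticOnNhd ℂ (deriv (deriv h)) s := hh1.deriv
  have hg1 : AnalyticOnNhd ℂ (deriv g) s := hg.deriv
  have hg2 : AnalyticOnNhd ℂ (deriv (deriv g)) s := hg1.deriv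
  set E : ℂ → ℂ := fun w => w ^ 2 * (deriv (deriv h) w + ζ * deriv (deriv g) w) +
      w * (deriv h w + ζ * deriv g w) - (h w + ζ * g w) with hE
  -- differentiability of E
  have hdE : DifferentiableOn ℂ E (ball (0:ℂ) 1) := by
    rw [← hsball]
    intro w hw
    exact (((differentiable_id.pow 2).differentiableAt.mul
        (((hh2 w hw).differentiableAt).add
          ((differentiableAt_const ζ).mul (hg2 w hw).differentiableAt))).add
      (differentiableAt_id.mul (((hh1 w hw).differentiableAt).add
        ((differentiableAt_const ζ).mul (hg1 w hw).differentiableAt)))).sub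
      (((hh w hw).differentiableAt).add
        ((differentiableAt_const ζ).mul (hg w hw).differentiableAt)) |>.differentiableWithinAt
  have hE0 : E 0 = 0 := by simp [hE, h0, g0]
  have hE1 : deriv E 0 = 0 := by
    have dsq : HasDerivAt (fun w : ℂ => w ^ 2) 0 0 := by simpa using hasDerivAt_pow 2 (0:ℂ)
    have dv : HasDerivAt (fun w => deriv (deriv h) w + ζ * deriv (deriv g) w)
        (deriv (deriv (deriv h)) 0 + ζ * deriv (deriv (deriv g)) 0) 0 :=
      ((hh2 0 h0s).differentiableAt.hasDerivAt).add
        (((hg2 0 h0s).differentiableAt.hasDerivAt).const_mul ζ)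
    have dB : HasDerivAt (fun w => deriv h w + ζ * deriv g w)
        (deriv (deriv h) 0 + ζ * deriv (deriv g) 0) 0 :=
      ((hh1 0 h0s).differentiableAt.hasDerivAt).add
        (((hg1 0 h0s).differentiableAt.hasDerivAt).const_mul ζ)
    have dC : HasDerivAt (fun w => h w + ζ * g w) (deriv h 0 + ζ * deriv g 0) 0 :=
      ((hh 0 h0s).differentiableAt.hasDerivAt).add
        (((hg 0 h0s).differentiableAt.hasDerivAt).const_mul ζ)
    have dE : HasDerivAt E
        ((0 * (deriv (deriv h) 0 + ζ * deriv (deriv g) 0) +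
          0 ^ 2 * (deriv (deriv (deriv h)) 0 + ζ * deriv (deriv (deriv g)) 0)) +
         (1 * (deriv h 0 + ζ * deriv g 0) + 0 * (deriv (deriv h) 0 + ζ * deriv (deriv g) 0)) -
         (deriv h 0 + ζ * deriv g 0)) 0 :=
      ((dsq.mul dv).add ((hasDerivAt_id (0:ℂ)).mul dB)).sub dC
    rw [dE.deriv]
    ring
  have hbE : ∀ w ∈ ball (0:ℂ) 1, ‖E w‖ ≤ 3 * lam := by
    intro w hw; exact hbd w (by rwa [hsball])
  have hSch : ∀ w ∈ ball (0:ℂ) 1, ‖E w‖ ≤ 3 * lam * ‖w‖ ^ 2 :=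
    fun w hw => schwarz2 hdE hbE hE0 hE1 hw
  -- the function u ↦ u * P u and its derivative
  set P : ℂ → ℂ := fun w => (h w - w * deriv h w) + ζ * (g w - w * deriv g w) with hP
  have hfd : ∀ w ∈ s, HasDerivAt (fun u => u * P u) (-E w) w := by
    intro w hw
    have Dh : HasDerivAt h (deriv h w) w := (hh w hw).differentiableAt.hasDerivAt
    have Dh' : HasDerivAt (deriv h) (deriv (deriv h) w) w :=
      (hh1 w hw).differentiableAt.hasDerivAt
    have Dg : HasDerivAt g (deriv g w) w := (hg w hw).differentiableAt.hasDerivAt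
    have Dg' : HasDerivAt (deriv g) (deriv (deriv g) w) w :=
      (hg1 w hw).differentiableAt.hasDerivAt
    have base : HasDerivAt (fun u => u * P u)
        (1 * P w + w * ((deriv h w - (1 * deriv h w + w * deriv (deriv h) w)) +
          ζ * (deriv g w - (1 * deriv g w + w * deriv (deriv g) w)))) w :=
      (hasDerivAt_id w).mul ((Dh.sub ((hasDerivAt_id w).mul Dh')).add
        ((Dg.sub ((hasDerivAt_id w).mul Dg')).const_mul ζ))
    convert base using 1
    simp only [hE, hP]
    ring
  -- FTC along the segment from 0 to z
  have hmapt : ∀ t ∈ Set.Icc (0:ℝ) 1, ((t:ℂ) * z) ∈ s := by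
    intro t ht
    simp only [hs, Set.mem_setOf_eq, norm_mul, Complex.norm_of_nonneg ht.1]
    calc t * ‖z‖ ≤ 1 * ‖z‖ :=
          mul_le_mul_of_nonneg_right ht.2 (norm_nonneg z)
      _ < 1 := by simpa [hs] using hz
  have hderφ : ∀ t ∈ Set.uIcc (0:ℝ) 1,
      HasDerivAt (fun s : ℝ => ((s:ℂ) * z) * P ((s:ℂ) * z)) (-E ((t:ℂ) * z) * z) t := by
    intro t ht
    rw [Set.uIcc_of_le zero_le_one] at ht
    have base := hfd _ (hmapt t ht)
    have lin : HasDerivAt (fun u : ℂ => u * z) z (t:ℂ) := by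
      simpa using (hasDerivAt_id (t:ℂ)).mul_const z
    have comp : HasDerivAt (fun u : ℂ => (u * z) * P (u * z)) (-E ((t:ℂ) * z) * z) (t:ℂ) := by
      simpa [Function.comp_def] using (base.comp (t:ℂ) lin)
    exact comp.comp_ofReal
  have hcontE : ContinuousOn (fun t : ℝ => -E ((t:ℂ) * z) * z) (Set.uIcc (0:ℝ) 1) := by
    rw [Set.uIcc_of_le zero_le_one]
    refine ((hdE.continuousOn.comp ?_ ?_).neg).mul continuousOn_const
    · exact (Complex.continuous_ofReal.continuousOn.mul continuousOn_const)
    · intro t ht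
      rw [← hsball]; exact hmapt t ht
  have hint : IntervalIntegrable (fun t : ℝ => -E ((t:ℂ) * z) * z)
      MeasureTheory.volume 0 1 := hcontE.intervalIntegrable
  have hFTC : ∫ t in (0:ℝ)..1, -E ((t:ℂ) * z) * z
      = ((1:ℂ) * z) * P ((1:ℂ) * z) - ((0:ℂ) * z) * P ((0:ℂ) * z) := by
    exact intervalIntegral.integral_eq_sub_of_hasDerivAt (fun t ht => by
      simpa using hderφ t ht) hint
  have hzP : z * P z = ∫ t in (0:ℝ)..1, -E ((t:ℂ) * z) * z := by
    rw [hFTC]; simp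
  -- norm estimate
  have hnb : ∀ t ∈ Set.uIcc (0:ℝ) 1,
      ‖-E ((t:ℂ) * z) * z‖ ≤ 3 * lam * ‖z‖ ^ 3 * t ^ 2 := by
    intro t ht
    rw [Set.uIcc_of_le zero_le_one] at ht
    have hmem := hmapt t ht
    have := hSch ((t:ℂ) * z) (by rwa [← hsball])
    rw [norm_mul, norm_neg]
    calc ‖E ((t:ℂ) * z)‖ * ‖z‖ ≤ (3 * lam * ‖(t:ℂ) * z‖ ^ 2) * ‖z‖ := by
          exact mul_le_mul_of_nonneg_right this (norm_nonneg z)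
      _ = 3 * lam * ‖z‖ ^ 3 * t ^ 2 := by
          rw [norm_mul, Complex.norm_of_nonneg ht.1]; ring
  have hlam0 : 0 ≤ lam := by
    have := hbd 0 h0s
    simp [h0, g0] at this
    linarith
  have hintb : IntervalIntegrable (fun t : ℝ => 3 * lam * ‖z‖ ^ 3 * t ^ 2)
      MeasureTheory.volume 0 1 := (continuous_const.mul (continuous_pow 2)).intervalIntegrable _ _
  have hnormint : ‖∫ t in (0:ℝ)..1, -E ((t:ℂ) * z) * z‖ ≤ lam * ‖z‖ ^ 3 := by
    calc ‖∫ t in (0:ℝ)..1, -E ((t:ℂ) * z) * z‖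
        ≤ ∫ t in (0:ℝ)..1, ‖-E ((t:ℂ) * z) * z‖ :=
          intervalIntegral.norm_integral_le_integral_norm zero_le_one
      _ ≤ ∫ t in (0:ℝ)..1, 3 * lam * ‖z‖ ^ 3 * t ^ 2 := by
          refine intervalIntegral.integral_mono_on zero_le_one hint.norm hintb ?_
          intro t ht
          exact hnb t (by rwa [Set.uIcc_of_le zero_le_one])
      _ = lam * ‖z‖ ^ 3 := by
          rw [intervalIntegral.integral_const_mul, integral_pow]
          norm_num; ring
  have hfinal : ‖z * P z‖ ≤ lam * ‖z‖ ^ 3 := by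
    rw [hzP]; exact hnormint
  rcases eq_or_ne z 0 with rfl | hz0
  · simp [hP, h0, g0]
  · rw [norm_mul] at hfinal
    have hz0' : 0 < ‖z‖ := norm_pos_iff.mpr hz0
    have : ‖z‖ * ‖P z‖ ≤ ‖z‖ * (lam * ‖z‖ ^ 2) := by
      calc ‖z‖ * ‖P z‖ ≤ lam * ‖z‖ ^ 3 := hfinal
        _ = ‖z‖ * (lam * ‖z‖ ^ 2) := by ring
    exact le_of_mul_le_mul_left this hz0'

lemma exists_unit_phase (a b : ℂ) : ∃ ζ : ℂ, ‖ζ‖ = 1 ∧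
    ‖a + ζ * b‖ = ‖a‖ + ‖b‖ := by
  rcases eq_or_ne a 0 with rfl | ha
  · exact ⟨1, by simp, by simp⟩
  rcases eq_or_ne b 0 with rfl | hb
  · exact ⟨1, by simp, by simp⟩
  refine ⟨a * (starRingEnd ℂ) b / ((‖a‖ : ℂ) * (‖b‖ : ℂ)), ?_, ?_⟩
  · rw [norm_div, norm_mul, Complex.norm_conj, norm_mul, Complex.norm_of_nonneg (norm_nonneg a),
      Complex.norm_of_nonneg (norm_nonneg b)]
    field_simp [norm_ne_zero_iff.mpr ha, norm_ne_zero_iff.mpr hb]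
  · have ha' : (‖a‖ : ℂ) ≠ 0 := by
      simpa using norm_ne_zero_iff.mpr ha
    have hb' : (‖b‖ : ℂ) ≠ 0 := by
      simpa using norm_ne_zero_iff.mpr hb
    have hconj : (starRingEnd ℂ) b * b = ((‖b‖ : ℂ)) ^ 2 := by
      rw [mul_comm, Complex.mul_conj, Complex.normSq_eq_norm_sq]
      push_cast; ring
    have key : a + a * (starRingEnd ℂ) b / ((‖a‖ : ℂ) * (‖b‖ : ℂ)) * b
        = a * (((‖a‖ : ℂ) + (‖b‖ : ℂ)) / (‖a‖ : ℂ)) := by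
      field_simp
      linear_combination hconj
    rw [key, norm_mul, norm_div, Complex.norm_of_nonneg (norm_nonneg a)]
    rw [show ‖(‖a‖ : ℂ) + (‖b‖ : ℂ)‖ =
        ‖a‖ + ‖b‖ by
      rw [← Complex.ofReal_add]
      exact Complex.norm_of_nonneg (by positivity)]
    field_simp [norm_ne_zero_iff.mpr ha]

theorem stmt5 (lam : ℝ) (hlam : 0 < lam) (h g : ℂ → ℂ)
    (hh : AnalyticOnNhd ℂ h unitDisk) (hg : AnalyticOnNhd ℂ g unitDisk)
    (h0 : h 0 = 0) (h1 : deriv h 0 = 1) (g0 : g 0 = 0) (g1 : deriv g 0 = 0)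
    (hbd : ∀ ζ : ℂ, ‖ζ‖ = 1 → ∀ z ∈ unitDisk,
      ‖z ^ 2 * (deriv (deriv h) z + ζ * deriv (deriv g) z) +
        z * (deriv h z + ζ * deriv g z) - (h z + ζ * g z)‖ ≤ 3 * lam) :
    OmegaH0 lam h g := by
  refine ⟨hh, hg, h0, h1, g0, g1, ?_⟩
  intro z hz
  obtain ⟨ζ, hζ1, hζeq⟩ := exists_unit_phase (h z - z * deriv h z) (g z - z * deriv g z)
  have hkb := keybound lam h g hh hg h0 g0 ζ (hbd ζ hζ1) z hz
  rw [hζeq] at hkb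
  have hz1 : ‖z‖ < 1 := hz
  have h2 : ‖z‖ ^ 2 < 1 := by nlinarith [norm_nonneg z]
  have hsq : lam * ‖z‖ ^ 2 < lam := by nlinarith
  linarith
end
end

section
/- Let 0 < λ ≤ 1. For i = 1, 2, let f_i = h_i + conj∘g_i belong to Ω_H^0(λ), where h_i(z) = z + Σ_{n≥2} a_n^{(i)} z^n and g_i(z) = Σ_{n≥2} b_n^{(i)} z^n on 𝔻 (a_n^{(i)} = h_i^{(n)}(0)/n!, b_n^{(i)} = g_i^{(n)}(0)/n!). Then the series h(z) = z + Σ_{n≥2} a_n^{(1)} a_n^{(2)} z^n and g(z) = Σ_{n≥2} b_n^{(1)} b_n^{(2)} z^n converge on 𝔻 and define analytic functions such that the harmonic convolution (f_1 ∗ f_2)(z) = h(z) + conj(g(z)) belongs to Ω_H^0(λ). -/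
open Complex

noncomputable section

/-- The `n`-th Taylor coefficient of `f` at the origin. -/
def taylorCoef (f : ℂ → ℂ) (n : ℕ) : ℂ := iteratedDeriv n f 0 / n.factorial

open MeasureTheory Real

lemma unitDisk_eq : unitDisk = Metric.ball (0:ℂ) 1 := by
  ext z; simp [unitDisk, Metric.mem_ball, Complex.dist_eq]

lemma isOpen_unitDisk : IsOpen unitDisk := by
  rw [unitDisk_eq]; exact Metric.isOpen_ball

lemma integral_exp_int (k : ℤ) :
    ∫ θ in (0:ℝ)..(2*Real.pi), Complex.exp ((k:ℂ) * θ * Complex.I)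
      = if k = 0 then ((2*Real.pi : ℝ):ℂ) else 0 := by
  rcases eq_or_ne k 0 with hk | hk
  · simp [hk]
  · have hc : (k:ℂ) * Complex.I ≠ 0 := by
      simp [Complex.I_ne_zero, hk]
    have heq : ∀ θ : ℝ, (k:ℂ) * θ * Complex.I = ((k:ℂ)*Complex.I) * θ := by
      intro θ; ring
    rw [if_neg hk]
    calc ∫ θ in (0:ℝ)..(2*Real.pi), Complex.exp ((k:ℂ) * θ * Complex.I)
        = ∫ θ in (0:ℝ)..(2*Real.pi), Complex.exp (((k:ℂ)*Complex.I) * θ) := by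
          simp_rw [heq]
      _ = (Complex.exp (((k:ℂ)*Complex.I) * ((2*Real.pi:ℝ):ℂ)) - Complex.exp (((k:ℂ)*Complex.I) * ((0:ℝ):ℂ))) / ((k:ℂ)*Complex.I) :=
          integral_exp_mul_complex hc
      _ = 0 := by
          have h1 : ((k:ℂ)*Complex.I) * ((2*Real.pi : ℝ):ℂ) = (k:ℂ) * (2 * (Real.pi:ℂ) * Complex.I) := by
            push_cast; ring
          rw [h1, Complex.exp_int_mul_two_pi_mul_I]
          simp

lemma ortho (ρ : ℝ) (m n : ℕ) :
    ∫ θ in Set.Ioc (0:ℝ) (2*Real.pi),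
        ((ρ:ℂ) * Complex.exp (θ * Complex.I))^(m+2) *
          (starRingEnd ℂ) (((ρ:ℂ) * Complex.exp (θ * Complex.I))^(n+2))
      = if m = n then (((2*Real.pi) * (ρ^(n+2) * ρ^(n+2)) : ℝ) : ℂ) else 0 := by
  have key : ∀ θ : ℝ,
      ((ρ:ℂ) * Complex.exp (θ * Complex.I))^(m+2) *
          (starRingEnd ℂ) (((ρ:ℂ) * Complex.exp (θ * Complex.I))^(n+2))
      = ((ρ^(m+2) * ρ^(n+2) : ℝ) : ℂ) *
          Complex.exp ((((m:ℤ) - (n:ℤ) : ℤ):ℂ) * θ * Complex.I) := by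
    intro θ
    have hconj : (starRingEnd ℂ) ((ρ:ℂ) * Complex.exp (θ * Complex.I))
        = (ρ:ℂ) * Complex.exp (-(θ * Complex.I)) := by
      rw [map_mul, Complex.conj_ofReal, ← Complex.exp_conj]
      congr 1
      simp [Complex.conj_I]
    rw [map_pow, hconj, mul_pow, mul_pow]
    rw [← Complex.exp_nat_mul, ← Complex.exp_nat_mul, mul_mul_mul_comm, ← Complex.exp_add]
    push_cast
    congr 1
    ring
  simp_rw [key]
  rw [MeasureTheory.integral_const_mul]
  rw [← intervalIntegral.integral_of_le (by positivity : (0:ℝ) ≤ 2*Real.pi)]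
  rw [integral_exp_int]
  rcases eq_or_ne m n with h | h
  · subst h
    simp only [sub_self, if_pos rfl, Int.sub_self]
    push_cast
    ring
  · have : (m:ℤ) - (n:ℤ) ≠ 0 := by omega
    rw [if_neg this, if_neg h, mul_zero]

lemma bessel (c : ℕ → ℂ) (F : ℝ → ℂ) (ρ : ℝ) (hρ0 : 0 < ρ)
    (hF : ∀ θ : ℝ, HasSum (fun n => c n * ((ρ:ℂ) * Complex.exp ((θ:ℂ) * Complex.I))^(n+2)) (F θ))
    (hFc : Continuous F)
    (hc : Summable (fun n => ‖c n‖ * ρ^(n+2))) :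
    HasSum (fun n => (‖c n‖ * ρ^(n+2))^2)
      ((2*Real.pi)⁻¹ * ∫ θ in Set.Ioc (0:ℝ) (2*Real.pi), ‖F θ‖^2) := by
  set e : ℕ → ℝ → ℂ := fun n θ => ((ρ:ℂ) * Complex.exp ((θ:ℂ) * Complex.I))^(n+2) with he
  have hπ : (0:ℝ) < 2*Real.pi := by positivity
  have hvol : (volume (Set.Ioc (0:ℝ) (2*Real.pi))).toReal = 2*Real.pi := by
    rw [Real.volume_Ioc]
    rw [ENNReal.toReal_ofReal (by linarith)]
    ring
  have hnorme : ∀ n θ, ‖e n θ‖ = ρ^(n+2) := by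
    intro n θ
    rw [he]
    simp only [norm_pow, norm_mul, Complex.norm_real, Real.norm_eq_abs,
      Complex.norm_exp_ofReal_mul_I, mul_one, abs_of_pos hρ0]
  have econt : ∀ n, Continuous (e n) := by
    intro n
    exact (continuous_const.mul (Complex.continuous_exp.comp
      (Complex.continuous_ofReal.mul continuous_const))).pow _
  -- Step 1: inner products with e n
  have hJ : ∀ n, ∫ θ in Set.Ioc (0:ℝ) (2*Real.pi), F θ * (starRingEnd ℂ) (e n θ)
      = (((2*Real.pi) * (ρ^(n+2) * ρ^(n+2)) : ℝ) : ℂ) * c n := by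
    intro n
    have hpt : ∀ θ : ℝ, HasSum (fun m => (c m * e m θ) * (starRingEnd ℂ) (e n θ))
        (F θ * (starRingEnd ℂ) (e n θ)) := fun θ => (hF θ).mul_right _
    have hint : ∀ m, IntegrableOn (fun θ => (c m * e m θ) * (starRingEnd ℂ) (e n θ))
        (Set.Ioc (0:ℝ) (2*Real.pi)) := by
      intro m
      exact (((continuous_const.mul (econt m)).mul
        (Complex.continuous_conj.comp (econt n)))).integrableOn_Ioc
    have hnormint : ∀ m, (∫ θ in Set.Ioc (0:ℝ) (2*Real.pi),
        ‖(c m * e m θ) * (starRingEnd ℂ) (e n θ)‖)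
        = (2*Real.pi * ρ^(n+2)) * (‖c m‖ * ρ^(m+2)) := by
      intro m
      have : (fun θ : ℝ => ‖(c m * e m θ) * (starRingEnd ℂ) (e n θ)‖)
          = fun _ : ℝ => ‖c m‖ * ρ^(m+2) * ρ^(n+2) := by
        funext θ
        rw [norm_mul, norm_mul, RCLike.norm_conj, hnorme, hnorme]
      rw [this, setIntegral_const, measureReal_def, hvol, smul_eq_mul]
      ring
    have hsumm : Summable (fun m => ∫ θ in Set.Ioc (0:ℝ) (2*Real.pi),
        ‖(c m * e m θ) * (starRingEnd ℂ) (e n θ)‖) := by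
      simp_rw [hnormint]
      exact hc.mul_left _
    have H := hasSum_integral_of_summable_integral_norm hint hsumm
    have htsum : (fun θ : ℝ => ∑' m, (c m * e m θ) * (starRingEnd ℂ) (e n θ))
        = fun θ => F θ * (starRingEnd ℂ) (e n θ) := funext fun θ => (hpt θ).tsum_eq
    rw [htsum] at H
    have hterm : (fun m => ∫ θ in Set.Ioc (0:ℝ) (2*Real.pi),
        (c m * e m θ) * (starRingEnd ℂ) (e n θ))
        = fun m => if m = n then (((2*Real.pi) * (ρ^(n+2) * ρ^(n+2)) : ℝ) : ℂ) * c n else 0 := by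
      funext m
      simp_rw [mul_assoc, MeasureTheory.integral_const_mul]
      rw [ortho ρ m n]
      split_ifs with h
      · subst h; ring
      · simp
    rw [hterm] at H
    exact (H.unique (hasSum_ite_eq n _))
  -- bound for F
  obtain ⟨M, hM⟩ : ∃ M : ℝ, ∀ θ ∈ Set.Ioc (0:ℝ) (2*Real.pi), ‖F θ‖ ≤ M := by
    obtain ⟨M, hM⟩ := (isCompact_Icc (a := (0:ℝ)) (b := 2*Real.pi)).exists_bound_of_continuousOn
      hFc.continuousOn
    exact ⟨M, fun θ hθ => hM θ (Set.Ioc_subset_Icc_self hθ)⟩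
  set M' := max M 0 with hM'
  have hMle : ∀ θ ∈ Set.Ioc (0:ℝ) (2*Real.pi), ‖F θ‖ ≤ M' :=
    fun θ hθ => le_trans (hM θ hθ) (le_max_left _ _)
  -- Step 2
  have hpt2 : ∀ θ : ℝ, HasSum (fun m => (c m * e m θ) * (starRingEnd ℂ) (F θ))
      (F θ * (starRingEnd ℂ) (F θ)) := fun θ => (hF θ).mul_right _
  have hint2 : ∀ m, IntegrableOn (fun θ => (c m * e m θ) * (starRingEnd ℂ) (F θ))
      (Set.Ioc (0:ℝ) (2*Real.pi)) := by
    intro m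
    exact ((continuous_const.mul (econt m)).mul
      (Complex.continuous_conj.comp hFc)).integrableOn_Ioc
  have hsumm2 : Summable (fun m => ∫ θ in Set.Ioc (0:ℝ) (2*Real.pi),
      ‖(c m * e m θ) * (starRingEnd ℂ) (F θ)‖) := by
    apply Summable.of_nonneg_of_le (fun m => integral_nonneg (fun θ => norm_nonneg _))
      (fun m => ?_) ((hc.mul_left ((2*Real.pi) * M')))
    have hle : ∀ θ ∈ Set.Ioc (0:ℝ) (2*Real.pi),
        ‖(c m * e m θ) * (starRingEnd ℂ) (F θ)‖ ≤ (‖c m‖ * ρ^(m+2)) * M' := by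
      intro θ hθ
      rw [norm_mul, norm_mul, RCLike.norm_conj, hnorme]
      exact mul_le_mul_of_nonneg_left (hMle θ hθ) (by positivity)
    calc (∫ θ in Set.Ioc (0:ℝ) (2*Real.pi), ‖(c m * e m θ) * (starRingEnd ℂ) (F θ)‖)
        ≤ ∫ _ in Set.Ioc (0:ℝ) (2*Real.pi), (‖c m‖ * ρ^(m+2)) * M' := by
          apply setIntegral_mono_on (hint2 m).norm (integrableOn_const ?_)
            measurableSet_Ioc hle
          rw [Real.volume_Ioc]; exact ENNReal.ofReal_ne_top
      _ = (2*Real.pi) * M' * (‖c m‖ * ρ^(m+2)) := by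
          rw [setIntegral_const, measureReal_def, hvol, smul_eq_mul]; ring
  have H2 := hasSum_integral_of_summable_integral_norm hint2 hsumm2
  have htsum2 : (fun θ : ℝ => ∑' m, (c m * e m θ) * (starRingEnd ℂ) (F θ))
      = fun θ => F θ * (starRingEnd ℂ) (F θ) := funext fun θ => (hpt2 θ).tsum_eq
  rw [htsum2] at H2
  have hterm2 : (fun m => ∫ θ in Set.Ioc (0:ℝ) (2*Real.pi),
      (c m * e m θ) * (starRingEnd ℂ) (F θ))
      = fun m => (((2*Real.pi) * (‖c m‖ * ρ^(m+2))^2 : ℝ) : ℂ) := by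
    funext m
    simp_rw [mul_assoc, MeasureTheory.integral_const_mul]
    have conjswap : ∀ θ : ℝ, e m θ * (starRingEnd ℂ) (F θ)
        = (starRingEnd ℂ) (F θ * (starRingEnd ℂ) (e m θ)) := by
      intro θ; rw [map_mul, RingHomCompTriple.comp_apply]
      · rw [mul_comm]; simp
    simp_rw [conjswap]
    rw [integral_conj, hJ m, map_mul]
    rw [Complex.conj_ofReal]
    rw [mul_left_comm, Complex.mul_conj, Complex.normSq_eq_norm_sq]
    push_cast
    ring
  rw [hterm2] at H2
  have hFF : (fun θ : ℝ => F θ * (starRingEnd ℂ) (F θ))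
      = fun θ : ℝ => ((‖F θ‖^2 : ℝ) : ℂ) := by
    funext θ
    rw [Complex.mul_conj, Complex.normSq_eq_norm_sq]
  rw [hFF] at H2
  have hcast : (∫ θ in Set.Ioc (0:ℝ) (2*Real.pi), ((‖F θ‖^2 : ℝ) : ℂ))
      = (((∫ θ in Set.Ioc (0:ℝ) (2*Real.pi), ‖F θ‖^2) : ℝ) : ℂ) := by
    exact integral_ofReal
  rw [hcast] at H2
  have H3 : HasSum (fun m => (2*Real.pi) * (‖c m‖ * ρ^(m+2))^2)
      (∫ θ in Set.Ioc (0:ℝ) (2*Real.pi), ‖F θ‖^2) := Complex.hasSum_ofReal.mp H2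
  have H4 := H3.mul_left (2*Real.pi)⁻¹
  have : (fun m => (2*Real.pi)⁻¹ * ((2*Real.pi) * (‖c m‖ * ρ^(m+2))^2))
      = fun m => (‖c m‖ * ρ^(m+2))^2 := by
    funext m
    field_simp
  rwa [this] at H4

lemma hasSum_sub_deriv (f : ℂ → ℂ) (hf : AnalyticOnNhd ℂ f unitDisk) (hf0 : f 0 = 0)
    {w : ℂ} (hw : w ∈ unitDisk) :
    HasSum (fun n : ℕ => (-(((n:ℕ):ℂ) + 1) * taylorCoef f (n+2)) * w^(n+2))
      (f w - w * deriv f w) := by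
  have hwball : w ∈ Metric.ball (0:ℂ) 1 := by rwa [← unitDisk_eq]
  have hdf : DifferentiableOn ℂ f (Metric.ball (0:ℂ) 1) := by
    intro z hz
    exact ((hf z (by rwa [unitDisk_eq])).differentiableAt).differentiableWithinAt
  have hdf' : DifferentiableOn ℂ (deriv f) (Metric.ball (0:ℂ) 1) := by
    intro z hz
    exact (((hf.deriv) z (by rwa [unitDisk_eq])).differentiableAt).differentiableWithinAt
  have h1 := Complex.hasSum_taylorSeries_on_ball hdf hwball
  have h2 := Complex.hasSum_taylorSeries_on_ball hdf' hwball
  simp only [sub_zero] at h1 h2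
  -- rewrite in terms of taylorCoef
  have e1 : (fun n : ℕ => ((n.factorial : ℕ) : ℂ)⁻¹ • w ^ n • iteratedDeriv n f 0)
      = fun n : ℕ => taylorCoef f n * w ^ n := by
    funext n
    rw [taylorCoef, smul_eq_mul, smul_eq_mul]
    field_simp
  rw [e1] at h1
  have e2 : (fun n : ℕ => ((n.factorial : ℕ) : ℂ)⁻¹ • w ^ n • iteratedDeriv n (deriv f) 0)
      = fun n : ℕ => (((n:ℕ):ℂ) + 1) * taylorCoef f (n+1) * w ^ n := by
    funext n
    rw [smul_eq_mul, smul_eq_mul, ← iteratedDeriv_succ', taylorCoef]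
    have hfac : (((n+1).factorial : ℕ) : ℂ) = ((n:ℂ) + 1) * ((n.factorial : ℕ) : ℂ) := by
      rw [Nat.factorial_succ]; push_cast; ring
    have h3 : ((n:ℂ) + 1) ≠ 0 := by
      exact_mod_cast (Nat.cast_ne_zero (R := ℂ)).mpr (Nat.succ_ne_zero n)
    rw [hfac, ← mul_div_assoc, mul_div_mul_left _ _ h3, div_eq_inv_mul]
    ring
  rw [e2] at h2
  -- multiply h2 by w
  have h2' : HasSum (fun n : ℕ => (((n:ℕ):ℂ) + 1) * taylorCoef f (n+1) * w ^ (n+1))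
      (w * deriv f w) := by
    have := h2.mul_left w
    convert this using 2 with n
    · rfl
    · ring
  -- shift h1 by one
  have ht0 : taylorCoef f 0 = 0 := by
    simp [taylorCoef, iteratedDeriv_zero, hf0]
  have h1' : HasSum (fun n : ℕ => taylorCoef f (n+1) * w ^ (n+1)) (f w) := by
    apply (hasSum_nat_add_iff (f := fun n => taylorCoef f n * w ^ n) 1).mpr
    convert h1 using 1
    rw [Finset.range_one, Finset.sum_singleton, ht0]
    simp
  have hsub := h1'.sub h2'
  have e3 : (fun n : ℕ => taylorCoef f (n+1) * w ^ (n+1)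
      - (((n:ℕ):ℂ) + 1) * taylorCoef f (n+1) * w ^ (n+1))
      = fun n : ℕ => (-((n:ℕ):ℂ) * taylorCoef f (n+1)) * w ^ (n+1) := by
    funext n; ring
  rw [e3] at hsub
  -- shift once more
  have hfinal : HasSum
      (fun n : ℕ => (-((((n+1):ℕ)):ℂ) * taylorCoef f ((n+1)+1)) * w ^ ((n+1)+1))
      (f w - w * deriv f w) := by
    apply (hasSum_nat_add_iff
      (f := fun n => (-((n:ℕ):ℂ) * taylorCoef f (n+1)) * w ^ (n+1)) 1).mpr
    convert hsub using 1
    rw [Finset.range_one, Finset.sum_singleton]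
    simp
  convert hfinal using 2 with n
  push_cast
  ring

lemma coefBound_of_hasSum (c : ℕ → ℂ) (r : ℝ) (hr : 0 ≤ r) (S : ℂ)
    (h : HasSum (fun n => c n * ((r:ℝ):ℂ)^(n+2)) S) :
    ∃ C : ℝ, 0 ≤ C ∧ ∀ n, ‖c n‖ * r^(n+2) ≤ C := by
  have h0 : Filter.Tendsto (fun n => ‖c n * ((r:ℝ):ℂ)^(n+2)‖) Filter.atTop (nhds 0) := by
    simpa using h.summable.tendsto_atTop_zero.norm
  have hb := h0.bddAbove_range
  obtain ⟨C, hC⟩ := hb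
  refine ⟨C, le_trans (norm_nonneg _) (hC (Set.mem_range_self 0)), fun n => ?_⟩
  have := hC (Set.mem_range_self n)
  calc ‖c n‖ * r^(n+2) = ‖c n * ((r:ℝ):ℂ)^(n+2)‖ := by
        rw [norm_mul, norm_pow, Complex.norm_real, Real.norm_of_nonneg hr]
    _ ≤ C := this

lemma summable_coef (c : ℕ → ℂ) (C r t : ℝ) (hr : 0 < r) (ht : 0 ≤ t) (htr : t < r)
    (hb : ∀ n, ‖c n‖ * r^(n+2) ≤ C) :
    Summable (fun n => ‖c n‖ * t^(n+2)) := by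
  have hq : 0 ≤ t / r := by positivity
  have hq1 : t / r < 1 := (div_lt_one hr).mpr htr
  refine Summable.of_nonneg_of_le (fun n => by positivity) (fun n => ?_)
    ((summable_geometric_of_lt_one hq hq1).mul_left (C * (t/r)^2))
  · have key : ‖c n‖ * t^(n+2) = (‖c n‖ * r^(n+2)) * (t/r)^(n+2) := by
      rw [div_pow, mul_assoc, mul_div_assoc']
      rw [mul_comm (r^(n+2)) (t^(n+2)), mul_div_assoc, div_self (by positivity), mul_one]
    rw [key]
    calc (‖c n‖ * r^(n+2)) * (t/r)^(n+2) ≤ C * (t/r)^(n+2) := by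
          apply mul_le_mul_of_nonneg_right (hb n) (by positivity)
      _ = (C * (t/r)^2) * (t/r)^n := by ring

lemma summable_coef_mul (c : ℕ → ℂ) (C r t : ℝ) (hr : 0 < r) (ht : 0 ≤ t) (htr : t < r)
    (hb : ∀ n, ‖c n‖ * r^(n+2) ≤ C) :
    Summable (fun n : ℕ => ((n:ℝ)+2) * (‖c n‖ * t^(n+2))) := by
  have hq : 0 ≤ t / r := by positivity
  have hq1 : t / r < 1 := (div_lt_one hr).mpr htr
  have hgeom : Summable (fun n : ℕ => ((n:ℝ)+2) * (t/r)^n) := by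
    have h1 : Summable (fun n : ℕ => (n:ℝ) * (t/r)^n) := by
      have := summable_pow_mul_geometric_of_norm_lt_one (R := ℝ) 1
        (r := t/r) (by rwa [Real.norm_of_nonneg hq])
      simpa using this
    have h2 : Summable (fun n : ℕ => (2:ℝ) * (t/r)^n) :=
      (summable_geometric_of_lt_one hq hq1).mul_left 2
    simpa [add_mul] using h1.add h2
  refine Summable.of_nonneg_of_le (fun n => by positivity) (fun n => ?_)
    (hgeom.mul_left (C * (t/r)^2))
  · have key : ‖c n‖ * t^(n+2) = (‖c n‖ * r^(n+2)) * (t/r)^(n+2) := by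
      rw [div_pow, mul_assoc, mul_div_assoc']
      rw [mul_comm (r^(n+2)) (t^(n+2)), mul_div_assoc, div_self (by positivity), mul_one]
    rw [key]
    calc ((n:ℝ)+2) * ((‖c n‖ * r^(n+2)) * (t/r)^(n+2))
        ≤ ((n:ℝ)+2) * (C * (t/r)^(n+2)) := by
          apply mul_le_mul_of_nonneg_left
            (mul_le_mul_of_nonneg_right (hb n) (by positivity)) (by positivity)
      _ = (C * (t/r)^2) * (((n:ℝ)+2) * (t/r)^n) := by ring

lemma hasDerivAt_tsum_pow (c : ℕ → ℂ)
    (hb : ∀ r : ℝ, 0 ≤ r → r < 1 → ∃ C : ℝ, 0 ≤ C ∧ ∀ n, ‖c n‖ * r^(n+2) ≤ C)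
    {z : ℂ} (hz : ‖z‖ < 1) :
    HasDerivAt (fun w => ∑' n : ℕ, c n * w^(n+2))
      (∑' n : ℕ, (((n:ℕ):ℂ)+2) * c n * z^(n+1)) z := by
  set r : ℝ := (‖z‖ + 1) / 2 with hrdef
  have hr0 : 0 < r := by positivity
  have hr1 : r < 1 := by rw [hrdef]; linarith
  have hzr : ‖z‖ < r := by rw [hrdef]; linarith
  set r₂ : ℝ := (r + 1) / 2 with hr2def
  have hr20 : 0 < r₂ := by positivity
  have hr21 : r₂ < 1 := by rw [hr2def]; linarith
  have hrr2 : r < r₂ := by rw [hr2def]; linarith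
  obtain ⟨C, hC0, hC⟩ := hb r₂ hr20.le hr21
  set q : ℝ := r / r₂ with hqdef
  have hq0 : 0 ≤ q := by positivity
  have hq1 : q < 1 := (div_lt_one hr20).mpr hrr2
  -- summable bound for derivative terms
  set u : ℕ → ℝ := fun n => (C / r₂) * (((n:ℝ)+2) * q^(n+1)) with hudef
  have hu : Summable u := by
    have h1 : Summable (fun n : ℕ => (n:ℝ) * q^n) := by
      have := summable_pow_mul_geometric_of_norm_lt_one (R := ℝ) 1
        (r := q) (by rwa [Real.norm_of_nonneg hq0])
      simpa using this
    have h2 : Summable (fun n : ℕ => (2:ℝ) * q^n) :=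
      (summable_geometric_of_lt_one hq0 hq1).mul_left 2
    have h3 : Summable (fun n : ℕ => ((n:ℝ)+2) * q^n) := by
      simpa [add_mul] using h1.add h2
    exact ((h3.mul_right q).congr (fun n => by ring)).mul_left _
  have hbound : ∀ (n : ℕ) (x : ℂ), x ∈ Metric.ball (0:ℂ) r →
      ‖(((n:ℕ):ℂ)+2) * c n * x^(n+1)‖ ≤ u n := by
    intro n x hx
    rw [mem_ball_zero_iff] at hx
    have hxn : ‖x‖^(n+1) ≤ r^(n+1) := pow_le_pow_left₀ (norm_nonneg _) hx.le _
    have hcn : ‖c n‖ ≤ C / r₂^(n+2) := by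
      rw [le_div_iff₀ (by positivity)]
      exact hC n
    rw [norm_mul, norm_mul, norm_pow]
    have hnn : ‖(((n:ℕ):ℂ)+2)‖ = (n:ℝ)+2 := by
      have : (((n:ℕ):ℂ)+2) = (((n+2 : ℕ)):ℂ) := by push_cast; ring
      rw [this, Complex.norm_natCast]; push_cast; ring
    rw [hnn]
    calc ((n:ℝ)+2) * ‖c n‖ * ‖x‖^(n+1)
        ≤ ((n:ℝ)+2) * (C / r₂^(n+2)) * r^(n+1) := by
          apply mul_le_mul (mul_le_mul_of_nonneg_left hcn (by positivity))
            hxn (by positivity) (by positivity)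
      _ = u n := by
          rw [hudef, hqdef]
          simp only [div_pow]
          field_simp
          ring
  have hball : IsOpen (Metric.ball (0:ℂ) r) := Metric.isOpen_ball
  have huc : TendstoUniformlyOn
      (fun (t : Finset ℕ) (x : ℂ) => ∑ n ∈ t, (((n:ℕ):ℂ)+2) * c n * x^(n+1))
      (fun x => ∑' n : ℕ, (((n:ℕ):ℂ)+2) * c n * x^(n+1)) Filter.atTop
      (Metric.ball (0:ℂ) r) :=
    tendstoUniformlyOn_tsum hu hbound
  have hderiv : ∀ (t : Finset ℕ) (x : ℂ), x ∈ Metric.ball (0:ℂ) r →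
      HasDerivAt (fun w => ∑ n ∈ t, c n * w^(n+2))
        (∑ n ∈ t, (((n:ℕ):ℂ)+2) * c n * x^(n+1)) x := by
    intro t x _
    apply HasDerivAt.fun_sum
    intro n _
    have h := (hasDerivAt_pow (n+2) x).const_mul (c n)
    convert h using 1
    · rfl
    · push_cast
      ring_nf
  have hptwise : ∀ x : ℂ, x ∈ Metric.ball (0:ℂ) r →
      Filter.Tendsto (fun t : Finset ℕ => ∑ n ∈ t, c n * x^(n+2)) Filter.atTop
        (nhds (∑' n : ℕ, c n * x^(n+2))) := by
    intro x hx
    rw [mem_ball_zero_iff] at hx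
    have hsum : Summable (fun n => c n * x^(n+2)) := by
      apply Summable.of_norm
      have : (fun n => ‖c n * x^(n+2)‖) = fun n => ‖c n‖ * ‖x‖^(n+2) := by
        funext n; rw [norm_mul, norm_pow]
      rw [this]
      exact summable_coef c C r₂ ‖x‖ hr20 (norm_nonneg _) (lt_trans hx hrr2) hC
    exact hsum.hasSum
  exact hasDerivAt_of_tendstoUniformlyOn hball huc
    (Filter.Eventually.of_forall hderiv) hptwise (mem_ball_zero_iff.mpr hzr)

lemma mem_unitDisk_of_norm {w : ℂ} (h : ‖w‖ < 1) : w ∈ unitDisk := by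
  simpa [unitDisk] using h

lemma source_coefBound (f : ℂ → ℂ) (hf : AnalyticOnNhd ℂ f unitDisk) (hf0 : f 0 = 0) :
    ∀ r : ℝ, 0 ≤ r → r < 1 →
      ∃ C : ℝ, 0 ≤ C ∧ ∀ n, ‖-(((n:ℕ):ℂ) + 1) * taylorCoef f (n+2)‖ * r^(n+2) ≤ C := by
  intro r h0 h1
  have hmem : ((r:ℝ):ℂ) ∈ unitDisk := by
    apply mem_unitDisk_of_norm
    rw [Complex.norm_real, Real.norm_of_nonneg h0]
    exact h1
  exact coefBound_of_hasSum _ r h0 _ (hasSum_sub_deriv f hf hf0 hmem)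

lemma norm_neg_mul (x : ℂ) (n : ℕ) :
    ‖-(((n:ℕ):ℂ) + 1) * x‖ = ((n:ℝ)+1) * ‖x‖ := by
  rw [norm_mul, norm_neg]
  congr 1
  have : (((n:ℕ):ℂ) + 1) = (((n+1 : ℕ)):ℂ) := by push_cast; ring
  rw [this, Complex.norm_natCast]
  push_cast; ring

lemma pair_bessel (lam : ℝ) (h g : ℂ → ℂ)
    (hhan : AnalyticOnNhd ℂ h unitDisk) (hgan : AnalyticOnNhd ℂ g unitDisk)
    (hh0 : h 0 = 0) (hg0 : g 0 = 0)
    (hineq : ∀ z ∈ unitDisk,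
      ‖h z - z * deriv h z‖ < lam - ‖g z - z * deriv g z‖)
    (ρ : ℝ) (hρ0 : 0 < ρ) (hρ1 : ρ < 1) :
    ∃ M : ℝ, 0 ≤ M ∧ M < lam ∧
      Summable (fun n => (‖-(((n:ℕ):ℂ) + 1) * taylorCoef h (n+2)‖ * ρ^(n+2))^2) ∧
      Summable (fun n => (‖-(((n:ℕ):ℂ) + 1) * taylorCoef g (n+2)‖ * ρ^(n+2))^2) ∧
      (∑' n, (‖-(((n:ℕ):ℂ) + 1) * taylorCoef h (n+2)‖ * ρ^(n+2))^2)
        + (∑' n, (‖-(((n:ℕ):ℂ) + 1) * taylorCoef g (n+2)‖ * ρ^(n+2))^2) ≤ M^2 := by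
  -- the boundary functions
  set φ : ℝ → ℂ := fun θ => (ρ:ℂ) * Complex.exp ((θ:ℂ) * Complex.I) with hφdef
  have hφcont : Continuous φ := continuous_const.mul
    (Complex.continuous_exp.comp (Complex.continuous_ofReal.mul continuous_const))
  have hφnorm : ∀ θ, ‖φ θ‖ = ρ := by
    intro θ
    rw [hφdef]
    simp only [norm_mul, Complex.norm_real, Real.norm_eq_abs, Complex.norm_exp_ofReal_mul_I,
      mul_one, abs_of_pos hρ0]
  have hφmem : ∀ θ, φ θ ∈ unitDisk := fun θ => mem_unitDisk_of_norm (by rw [hφnorm]; exact hρ1)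
  set F : ℝ → ℂ := fun θ => h (φ θ) - (φ θ) * deriv h (φ θ) with hFdef
  set G : ℝ → ℂ := fun θ => g (φ θ) - (φ θ) * deriv g (φ θ) with hGdef
  have hFc : Continuous F := by
    apply Continuous.sub
    · exact hhan.continuousOn.comp_continuous hφcont hφmem
    · exact hφcont.mul ((hhan.deriv.continuousOn).comp_continuous hφcont hφmem)
  have hGc : Continuous G := by
    apply Continuous.sub
    · exact hgan.continuousOn.comp_continuous hφcont hφmem
    · exact hφcont.mul ((hgan.deriv.continuousOn).comp_continuous hφcont hφmem)
  have hFsum : ∀ θ : ℝ, HasSum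
      (fun n => (-(((n:ℕ):ℂ) + 1) * taylorCoef h (n+2)) * (φ θ)^(n+2)) (F θ) :=
    fun θ => hasSum_sub_deriv h hhan hh0 (hφmem θ)
  have hGsum : ∀ θ : ℝ, HasSum
      (fun n => (-(((n:ℕ):ℂ) + 1) * taylorCoef g (n+2)) * (φ θ)^(n+2)) (G θ) :=
    fun θ => hasSum_sub_deriv g hgan hg0 (hφmem θ)
  -- summability at radius ρ
  set r₄ : ℝ := (ρ + 1)/2 with hr4
  have hr40 : 0 < r₄ := by positivity
  have hr41 : r₄ < 1 := by rw [hr4]; linarith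
  have hρr4 : ρ < r₄ := by rw [hr4]; linarith
  obtain ⟨C₁, hC₁0, hC₁⟩ := source_coefBound h hhan hh0 r₄ hr40.le hr41
  obtain ⟨C₂, hC₂0, hC₂⟩ := source_coefBound g hgan hg0 r₄ hr40.le hr41
  have hsumF : Summable (fun n => ‖-(((n:ℕ):ℂ) + 1) * taylorCoef h (n+2)‖ * ρ^(n+2)) :=
    summable_coef _ C₁ r₄ ρ hr40 hρ0.le hρr4 hC₁
  have hsumG : Summable (fun n => ‖-(((n:ℕ):ℂ) + 1) * taylorCoef g (n+2)‖ * ρ^(n+2)) :=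
    summable_coef _ C₂ r₄ ρ hr40 hρ0.le hρr4 hC₂
  -- Bessel for both
  have HB1 := bessel _ F ρ hρ0 hFsum hFc hsumF
  have HB2 := bessel _ G ρ hρ0 hGsum hGc hsumG
  -- the sup on the sphere
  set ψ : ℂ → ℝ := fun w => ‖h w - w * deriv h w‖ + ‖g w - w * deriv g w‖ with hψdef
  have hsph_sub : Metric.sphere (0:ℂ) ρ ⊆ unitDisk := by
    intro w hw
    rw [mem_sphere_zero_iff_norm] at hw
    exact mem_unitDisk_of_norm (by rw [hw]; exact hρ1)
  have hψcont : ContinuousOn ψ (Metric.sphere (0:ℂ) ρ) := by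
    apply ContinuousOn.add
    · exact (((hhan.continuousOn).sub (continuousOn_id.mul
        (hhan.deriv.continuousOn))).norm).mono hsph_sub
    · exact (((hgan.continuousOn).sub (continuousOn_id.mul
        (hgan.deriv.continuousOn))).norm).mono hsph_sub
  have hsph_ne : (Metric.sphere (0:ℂ) ρ).Nonempty := by
    refine ⟨((ρ:ℝ):ℂ), ?_⟩
    rw [mem_sphere_zero_iff_norm, Complex.norm_real, Real.norm_of_nonneg hρ0.le]
  obtain ⟨w₀, hw₀mem, hw₀max⟩ := (isCompact_sphere (0:ℂ) ρ).exists_isMaxOn hsph_ne hψcont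
  set M : ℝ := ψ w₀ with hMdef
  have hM0 : 0 ≤ M := by rw [hMdef, hψdef]; positivity
  have hMlam : M < lam := by
    have h' := hineq w₀ (hsph_sub hw₀mem)
    have hM' : M = ‖h w₀ - w₀ * deriv h w₀‖ + ‖g w₀ - w₀ * deriv g w₀‖ := rfl
    rw [hM']
    linarith
  refine ⟨M, hM0, hMlam, HB1.summable, HB2.summable, ?_⟩
  rw [HB1.tsum_eq, HB2.tsum_eq]
  -- bound the integrals
  have hFGle : ∀ θ ∈ Set.Ioc (0:ℝ) (2*Real.pi), ‖F θ‖^2 + ‖G θ‖^2 ≤ M^2 := by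
    intro θ _
    have hmem : φ θ ∈ Metric.sphere (0:ℂ) ρ := by
      rw [mem_sphere_zero_iff_norm]; exact hφnorm θ
    have hle : ψ (φ θ) ≤ M := hw₀max hmem
    rw [hψdef] at hle
    simp only at hle
    have h1 : (0:ℝ) ≤ ‖F θ‖ := norm_nonneg _
    have h2 : (0:ℝ) ≤ ‖G θ‖ := norm_nonneg _
    rw [hFdef, hGdef] at *
    nlinarith [hle]
  have hintF : IntegrableOn (fun θ => ‖F θ‖^2) (Set.Ioc (0:ℝ) (2*Real.pi)) :=
    ((hFc.norm.pow 2)).integrableOn_Ioc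
  have hintG : IntegrableOn (fun θ => ‖G θ‖^2) (Set.Ioc (0:ℝ) (2*Real.pi)) :=
    ((hGc.norm.pow 2)).integrableOn_Ioc
  have hπ : (0:ℝ) < 2*Real.pi := by positivity
  have hvol : (volume (Set.Ioc (0:ℝ) (2*Real.pi))).toReal = 2*Real.pi := by
    rw [Real.volume_Ioc, ENNReal.toReal_ofReal (by linarith)]
    ring
  have key : (∫ θ in Set.Ioc (0:ℝ) (2*Real.pi), ‖F θ‖^2)
      + (∫ θ in Set.Ioc (0:ℝ) (2*Real.pi), ‖G θ‖^2) ≤ (2*Real.pi) * M^2 := by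
    rw [← MeasureTheory.integral_add hintF hintG]
    calc (∫ θ in Set.Ioc (0:ℝ) (2*Real.pi), (‖F θ‖^2 + ‖G θ‖^2))
        ≤ ∫ _ in Set.Ioc (0:ℝ) (2*Real.pi), M^2 := by
          apply setIntegral_mono_on (hintF.add hintG) (integrableOn_const ?_)
            measurableSet_Ioc hFGle
          rw [Real.volume_Ioc]; exact ENNReal.ofReal_ne_top
      _ = (2*Real.pi) * M^2 := by rw [setIntegral_const, measureReal_def, hvol, smul_eq_mul]
  have h2πinv : (0:ℝ) < (2*Real.pi)⁻¹ := by positivity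
  calc (2*Real.pi)⁻¹ * (∫ θ in Set.Ioc (0:ℝ) (2*Real.pi), ‖F θ‖^2)
        + (2*Real.pi)⁻¹ * (∫ θ in Set.Ioc (0:ℝ) (2*Real.pi), ‖G θ‖^2)
      = (2*Real.pi)⁻¹ * ((∫ θ in Set.Ioc (0:ℝ) (2*Real.pi), ‖F θ‖^2)
        + (∫ θ in Set.Ioc (0:ℝ) (2*Real.pi), ‖G θ‖^2)) := by ring
    _ ≤ (2*Real.pi)⁻¹ * ((2*Real.pi) * M^2) := by
        apply mul_le_mul_of_nonneg_left key h2πinv.le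
    _ = M^2 := by field_simp

theorem stmt6 (lam : ℝ) (hlam0 : 0 < lam) (hlam : lam ≤ 1)
    (h₁ g₁ h₂ g₂ : ℂ → ℂ)
    (hf₁ : OmegaH0 lam h₁ g₁) (hf₂ : OmegaH0 lam h₂ g₂) :
    (∀ z ∈ unitDisk,
      Summable (fun n : ℕ =>
        taylorCoef h₁ (n + 2) * taylorCoef h₂ (n + 2) * z ^ (n + 2)) ∧
      Summable (fun n : ℕ =>
        taylorCoef g₁ (n + 2) * taylorCoef g₂ (n + 2) * z ^ (n + 2))) ∧
    OmegaH0 lam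
      (fun z => z + ∑' n : ℕ,
        taylorCoef h₁ (n + 2) * taylorCoef h₂ (n + 2) * z ^ (n + 2))
      (fun z => ∑' n : ℕ,
        taylorCoef g₁ (n + 2) * taylorCoef g₂ (n + 2) * z ^ (n + 2)) := by
  obtain ⟨H1an, G1an, h10, h1d, g10, g1d, hw1⟩ := hf₁
  obtain ⟨H2an, G2an, h20, h2d, g20, g2d, hw2⟩ := hf₂
  have hnormz : ∀ z : ℂ, z ∈ unitDisk → ‖z‖ < 1 := by
    intro z hz; exact hz
  -- coefficient bounds for the product coefficients
  have cbGen : ∀ (f₁ f₂ : ℂ → ℂ), AnalyticOnNhd ℂ f₁ unitDisk → AnalyticOnNhd ℂ f₂ unitDisk →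
      f₁ 0 = 0 → f₂ 0 = 0 →
      ∀ r : ℝ, 0 ≤ r → r < 1 → ∃ C : ℝ, 0 ≤ C ∧ ∀ n,
        ‖taylorCoef f₁ (n+2) * taylorCoef f₂ (n+2)‖ * r^(n+2) ≤ C := by
    intro f₁ f₂ han1 han2 hz1 hz2 r h0 h1
    set ρ := Real.sqrt r with hρ
    have hρ0 : 0 ≤ ρ := Real.sqrt_nonneg r
    have hρ1 : ρ < 1 := by
      rw [hρ, show (1:ℝ) = Real.sqrt 1 by simp]
      exact Real.sqrt_lt_sqrt h0 (by linarith)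
    obtain ⟨C₁, hC₁0, hC₁⟩ := source_coefBound f₁ han1 hz1 ρ hρ0 hρ1
    obtain ⟨C₂, hC₂0, hC₂⟩ := source_coefBound f₂ han2 hz2 ρ hρ0 hρ1
    refine ⟨C₁*C₂, mul_nonneg hC₁0 hC₂0, fun n => ?_⟩
    have hr : r^(n+2) = ρ^(n+2) * ρ^(n+2) := by
      rw [hρ, ← mul_pow, Real.mul_self_sqrt h0]
    have hle : ‖taylorCoef f₁ (n+2) * taylorCoef f₂ (n+2)‖
        ≤ ‖-(((n:ℕ):ℂ)+1) * taylorCoef f₁ (n+2)‖ * ‖-(((n:ℕ):ℂ)+1) * taylorCoef f₂ (n+2)‖ := by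
      rw [norm_mul, norm_neg_mul, norm_neg_mul]
      have h1' : (0:ℝ) ≤ ‖taylorCoef f₁ (n+2)‖ := norm_nonneg _
      have h2' : (0:ℝ) ≤ ‖taylorCoef f₂ (n+2)‖ := norm_nonneg _
      have hn : (1:ℝ) ≤ (n:ℝ)+1 := by
        have : (0:ℝ) ≤ (n:ℝ) := Nat.cast_nonneg n
        linarith
      calc ‖taylorCoef f₁ (n+2)‖ * ‖taylorCoef f₂ (n+2)‖
          ≤ (((n:ℝ)+1) * ((n:ℝ)+1)) * (‖taylorCoef f₁ (n+2)‖ * ‖taylorCoef f₂ (n+2)‖) :=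
            le_mul_of_one_le_left (mul_nonneg h1' h2') (by nlinarith)
        _ = ((n:ℝ)+1) * ‖taylorCoef f₁ (n+2)‖ * (((n:ℝ)+1) * ‖taylorCoef f₂ (n+2)‖) := by ring
    calc ‖taylorCoef f₁ (n+2) * taylorCoef f₂ (n+2)‖ * r^(n+2)
        = ‖taylorCoef f₁ (n+2) * taylorCoef f₂ (n+2)‖ * (ρ^(n+2) * ρ^(n+2)) := by rw [hr]
      _ ≤ (‖-(((n:ℕ):ℂ)+1) * taylorCoef f₁ (n+2)‖ * ‖-(((n:ℕ):ℂ)+1) * taylorCoef f₂ (n+2)‖)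
            * (ρ^(n+2) * ρ^(n+2)) := by
          apply mul_le_mul_of_nonneg_right hle (by positivity)
      _ = (‖-(((n:ℕ):ℂ)+1) * taylorCoef f₁ (n+2)‖ * ρ^(n+2))
            * (‖-(((n:ℕ):ℂ)+1) * taylorCoef f₂ (n+2)‖ * ρ^(n+2)) := by ring
      _ ≤ C₁ * C₂ := by
          apply mul_le_mul (hC₁ n) (hC₂ n) (by positivity) hC₁0
  have cbA := cbGen h₁ h₂ H1an H2an h10 h20
  have cbB := cbGen g₁ g₂ G1an G2an g10 g20
  -- summability of coefficient norms
  have sumGen : ∀ (c : ℕ → ℂ), (∀ r : ℝ, 0 ≤ r → r < 1 →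
        ∃ C : ℝ, 0 ≤ C ∧ ∀ n, ‖c n‖ * r^(n+2) ≤ C) →
      ∀ t : ℝ, 0 ≤ t → t < 1 →
        Summable (fun n => ‖c n‖ * t^(n+2)) ∧
        Summable (fun n : ℕ => ((n:ℝ)+2) * (‖c n‖ * t^(n+2))) := by
    intro c hcb t h0 h1
    obtain ⟨C, hC0, hC⟩ := hcb ((t+1)/2) (by positivity) (by linarith)
    constructor
    · exact summable_coef c C ((t+1)/2) t (by positivity) h0 (by linarith) hC
    · exact summable_coef_mul c C ((t+1)/2) t (by positivity) h0 (by linarith) hC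
  have sumA := sumGen _ cbA
  have sumB := sumGen _ cbB
  -- summability of the complex series
  have sumCA : ∀ z : ℂ, ‖z‖ < 1 →
      Summable (fun n : ℕ => taylorCoef h₁ (n+2) * taylorCoef h₂ (n+2) * z^(n+2)) := by
    intro z hz
    apply Summable.of_norm
    have he : (fun n : ℕ => ‖taylorCoef h₁ (n+2) * taylorCoef h₂ (n+2) * z^(n+2)‖)
        = fun n => ‖taylorCoef h₁ (n+2) * taylorCoef h₂ (n+2)‖ * ‖z‖^(n+2) := by
      funext n; rw [norm_mul, norm_pow]
    rw [he]
    exact (sumA ‖z‖ (norm_nonneg z) hz).1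
  have sumCB : ∀ z : ℂ, ‖z‖ < 1 →
      Summable (fun n : ℕ => taylorCoef g₁ (n+2) * taylorCoef g₂ (n+2) * z^(n+2)) := by
    intro z hz
    apply Summable.of_norm
    have he : (fun n : ℕ => ‖taylorCoef g₁ (n+2) * taylorCoef g₂ (n+2) * z^(n+2)‖)
        = fun n => ‖taylorCoef g₁ (n+2) * taylorCoef g₂ (n+2)‖ * ‖z‖^(n+2) := by
      funext n; rw [norm_mul, norm_pow]
    rw [he]
    exact (sumB ‖z‖ (norm_nonneg z) hz).1
  -- derivatives
  have HDT : ∀ z : ℂ, ‖z‖ < 1 →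
      HasDerivAt (fun w : ℂ => ∑' n : ℕ, taylorCoef h₁ (n+2) * taylorCoef h₂ (n+2) * w^(n+2))
        (∑' n : ℕ, (((n:ℕ):ℂ)+2) * (taylorCoef h₁ (n+2) * taylorCoef h₂ (n+2)) * z^(n+1)) z :=
    fun z hz => hasDerivAt_tsum_pow _ cbA hz
  have HDTg : ∀ z : ℂ, ‖z‖ < 1 →
      HasDerivAt (fun w : ℂ => ∑' n : ℕ, taylorCoef g₁ (n+2) * taylorCoef g₂ (n+2) * w^(n+2))
        (∑' n : ℕ, (((n:ℕ):ℂ)+2) * (taylorCoef g₁ (n+2) * taylorCoef g₂ (n+2)) * z^(n+1)) z :=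
    fun z hz => hasDerivAt_tsum_pow _ cbB hz
  have HDh : ∀ z : ℂ, ‖z‖ < 1 →
      HasDerivAt (fun w : ℂ => w + ∑' n : ℕ, taylorCoef h₁ (n+2) * taylorCoef h₂ (n+2) * w^(n+2))
        (1 + ∑' n : ℕ, (((n:ℕ):ℂ)+2) * (taylorCoef h₁ (n+2) * taylorCoef h₂ (n+2)) * z^(n+1)) z :=
    fun z hz => (hasDerivAt_id z).add (HDT z hz)
  refine ⟨fun z hz => ⟨sumCA z (hnormz z hz), sumCB z (hnormz z hz)⟩, ?_, ?_, ?_, ?_, ?_, ?_, ?_⟩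
  · -- analytic h
    apply DifferentiableOn.analyticOnNhd ?_ isOpen_unitDisk
    intro z hz
    exact (HDh z (hnormz z hz)).differentiableAt.differentiableWithinAt
  · -- analytic g
    apply DifferentiableOn.analyticOnNhd ?_ isOpen_unitDisk
    intro z hz
    exact (HDTg z (hnormz z hz)).differentiableAt.differentiableWithinAt
  · -- value at 0
    simp
  · -- deriv at 0 = 1
    rw [(HDh 0 (by norm_num)).deriv]
    simp
  · simp
  · rw [(HDTg 0 (by norm_num)).deriv]
    simp
  · -- the main inequality
    intro z hz
    have hz' : ‖z‖ < 1 := hnormz z hz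
    have ht0 : (0:ℝ) ≤ ‖z‖ := norm_nonneg z
    set s : ℝ := (‖z‖ + 1)/2 with hsdef
    have hs0 : 0 < s := by positivity
    have hs1 : s < 1 := by rw [hsdef]; linarith
    have hts : ‖z‖ < s := by rw [hsdef]; linarith
    set ρ : ℝ := Real.sqrt s with hρdef
    have hρ0 : 0 < ρ := Real.sqrt_pos.mpr hs0
    have hρ1 : ρ < 1 := by
      rw [hρdef, show (1:ℝ) = Real.sqrt 1 by simp]
      exact Real.sqrt_lt_sqrt hs0.le (by linarith)
    have hρsq : ρ * ρ = s := Real.mul_self_sqrt hs0.le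
    obtain ⟨M₁, hM₁0, hM₁lam, hS1a, hS1b, hT1⟩ :=
      pair_bessel lam h₁ g₁ H1an G1an h10 g10 hw1 ρ hρ0 hρ1
    obtain ⟨M₂, hM₂0, hM₂lam, hS2a, hS2b, hT2⟩ :=
      pair_bessel lam h₂ g₂ H2an G2an h20 g20 hw2 ρ hρ0 hρ1
    have hnn : ∀ n : ℕ, ‖(((n:ℕ):ℂ)+2)‖ = (n:ℝ)+2 := by
      intro n
      rw [show (((n:ℕ):ℂ)+2) = (((n+2:ℕ)):ℂ) by push_cast; ring, Complex.norm_natCast]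
      push_cast; ring
    -- rewrite the derivatives
    rw [(HDh z hz').deriv, (HDTg z hz').deriv]
    -- identify with a single tsum
    have hgsumA : Summable (fun n : ℕ =>
        z * ((((n:ℕ):ℂ)+2) * (taylorCoef h₁ (n+2) * taylorCoef h₂ (n+2)) * z^(n+1))) := by
      apply Summable.of_norm
      apply Summable.congr ((sumA ‖z‖ ht0 hz').2)
      intro n
      simp only [norm_mul, norm_pow, hnn]
      ring
    have hgsumB : Summable (fun n : ℕ =>
        z * ((((n:ℕ):ℂ)+2) * (taylorCoef g₁ (n+2) * taylorCoef g₂ (n+2)) * z^(n+1))) := by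
      apply Summable.of_norm
      apply Summable.congr ((sumB ‖z‖ ht0 hz').2)
      intro n
      simp only [norm_mul, norm_pow, hnn]
      ring
    have heqh : (fun w : ℂ => w + ∑' n : ℕ,
          taylorCoef h₁ (n+2) * taylorCoef h₂ (n+2) * w^(n+2)) z
        - z * (1 + ∑' n : ℕ, (((n:ℕ):ℂ)+2) * (taylorCoef h₁ (n+2) * taylorCoef h₂ (n+2)) * z^(n+1))
        = ∑' n : ℕ, -(((n:ℕ):ℂ)+1) * (taylorCoef h₁ (n+2) * taylorCoef h₂ (n+2)) * z^(n+2) := by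
      show z + _ - _ = _
      calc z + (∑' n : ℕ, taylorCoef h₁ (n+2) * taylorCoef h₂ (n+2) * z^(n+2))
            - z * (1 + ∑' n : ℕ, (((n:ℕ):ℂ)+2) * (taylorCoef h₁ (n+2) * taylorCoef h₂ (n+2)) * z^(n+1))
          = (∑' n : ℕ, taylorCoef h₁ (n+2) * taylorCoef h₂ (n+2) * z^(n+2))
            - z * (∑' n : ℕ, (((n:ℕ):ℂ)+2) * (taylorCoef h₁ (n+2) * taylorCoef h₂ (n+2)) * z^(n+1)) := by ring
        _ = (∑' n : ℕ, taylorCoef h₁ (n+2) * taylorCoef h₂ (n+2) * z^(n+2))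
            - ∑' n : ℕ, z * ((((n:ℕ):ℂ)+2) * (taylorCoef h₁ (n+2) * taylorCoef h₂ (n+2)) * z^(n+1)) := by
            rw [tsum_mul_left]
        _ = ∑' n : ℕ, (taylorCoef h₁ (n+2) * taylorCoef h₂ (n+2) * z^(n+2)
            - z * ((((n:ℕ):ℂ)+2) * (taylorCoef h₁ (n+2) * taylorCoef h₂ (n+2)) * z^(n+1))) :=
            ((sumCA z hz').hasSum.sub hgsumA.hasSum).tsum_eq.symm
        _ = ∑' n : ℕ, -(((n:ℕ):ℂ)+1) * (taylorCoef h₁ (n+2) * taylorCoef h₂ (n+2)) * z^(n+2) := by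
            apply tsum_congr
            intro n
            ring
    have heqg : (fun w : ℂ => ∑' n : ℕ,
          taylorCoef g₁ (n+2) * taylorCoef g₂ (n+2) * w^(n+2)) z
        - z * (∑' n : ℕ, (((n:ℕ):ℂ)+2) * (taylorCoef g₁ (n+2) * taylorCoef g₂ (n+2)) * z^(n+1))
        = ∑' n : ℕ, -(((n:ℕ):ℂ)+1) * (taylorCoef g₁ (n+2) * taylorCoef g₂ (n+2)) * z^(n+2) := by
      show (∑' n : ℕ, taylorCoef g₁ (n+2) * taylorCoef g₂ (n+2) * z^(n+2)) - _ = _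
      calc (∑' n : ℕ, taylorCoef g₁ (n+2) * taylorCoef g₂ (n+2) * z^(n+2))
            - z * (∑' n : ℕ, (((n:ℕ):ℂ)+2) * (taylorCoef g₁ (n+2) * taylorCoef g₂ (n+2)) * z^(n+1))
          = (∑' n : ℕ, taylorCoef g₁ (n+2) * taylorCoef g₂ (n+2) * z^(n+2))
            - ∑' n : ℕ, z * ((((n:ℕ):ℂ)+2) * (taylorCoef g₁ (n+2) * taylorCoef g₂ (n+2)) * z^(n+1)) := by
            rw [tsum_mul_left]
        _ = ∑' n : ℕ, (taylorCoef g₁ (n+2) * taylorCoef g₂ (n+2) * z^(n+2)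
            - z * ((((n:ℕ):ℂ)+2) * (taylorCoef g₁ (n+2) * taylorCoef g₂ (n+2)) * z^(n+1))) :=
            ((sumCB z hz').hasSum.sub hgsumB.hasSum).tsum_eq.symm
        _ = ∑' n : ℕ, -(((n:ℕ):ℂ)+1) * (taylorCoef g₁ (n+2) * taylorCoef g₂ (n+2)) * z^(n+2) := by
            apply tsum_congr
            intro n
            ring
    rw [heqh, heqg]
    -- now bound the two sums
    have hzs : ‖z‖ ≤ ρ * ρ := by rw [hρsq]; exact hts.le
    have hamgm : ∀ (m a b X : ℝ), 1 ≤ m → 0 ≤ a → 0 ≤ b → 0 ≤ X →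
        m * (a * b) * (X * X) ≤ ((m * a * X)^2 + (m * b * X)^2)/2 := by
      intro m a b X hm ha hb hX
      have hm0 : (0:ℝ) ≤ m := le_trans zero_le_one hm
      have h2 : m * (a * b) * (X * X) ≤ (m * a * X) * (m * b * X) := by
        have key : 0 ≤ (m*(m-1)) * (a*b*(X*X)) :=
          mul_nonneg (mul_nonneg hm0 (by linarith)) (by positivity)
        nlinarith [key]
      nlinarith [sq_nonneg (m * a * X - m * b * X)]
    have normleA : ∀ n : ℕ,
        ‖-(((n:ℕ):ℂ)+1) * (taylorCoef h₁ (n+2) * taylorCoef h₂ (n+2)) * z^(n+2)‖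
        ≤ ((‖-(((n:ℕ):ℂ)+1) * taylorCoef h₁ (n+2)‖ * ρ^(n+2))^2
            + (‖-(((n:ℕ):ℂ)+1) * taylorCoef h₂ (n+2)‖ * ρ^(n+2))^2)/2 := by
      intro n
      rw [norm_mul, norm_pow, norm_neg_mul, norm_mul, norm_neg_mul, norm_neg_mul]
      have h1n : (1:ℝ) ≤ (n:ℝ)+1 := by
        have : (0:ℝ) ≤ (n:ℝ) := Nat.cast_nonneg n
        linarith
      have hz2 : ‖z‖^(n+2) ≤ (ρ*ρ)^(n+2) := pow_le_pow_left₀ ht0 hzs _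
      calc ((n:ℝ)+1) * (‖taylorCoef h₁ (n+2)‖ * ‖taylorCoef h₂ (n+2)‖) * ‖z‖^(n+2)
          ≤ ((n:ℝ)+1) * (‖taylorCoef h₁ (n+2)‖ * ‖taylorCoef h₂ (n+2)‖) * (ρ*ρ)^(n+2) := by
            apply mul_le_mul_of_nonneg_left hz2 (by positivity)
        _ = ((n:ℝ)+1) * (‖taylorCoef h₁ (n+2)‖ * ‖taylorCoef h₂ (n+2)‖) * (ρ^(n+2) * ρ^(n+2)) := by
            rw [← mul_pow]
        _ ≤ ((((n:ℝ)+1) * ‖taylorCoef h₁ (n+2)‖ * ρ^(n+2))^2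
              + (((n:ℝ)+1) * ‖taylorCoef h₂ (n+2)‖ * ρ^(n+2))^2)/2 :=
            hamgm _ _ _ _ h1n (norm_nonneg _) (norm_nonneg _) (by positivity)
    have normleB : ∀ n : ℕ,
        ‖-(((n:ℕ):ℂ)+1) * (taylorCoef g₁ (n+2) * taylorCoef g₂ (n+2)) * z^(n+2)‖
        ≤ ((‖-(((n:ℕ):ℂ)+1) * taylorCoef g₁ (n+2)‖ * ρ^(n+2))^2
            + (‖-(((n:ℕ):ℂ)+1) * taylorCoef g₂ (n+2)‖ * ρ^(n+2))^2)/2 := by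
      intro n
      rw [norm_mul, norm_pow, norm_neg_mul, norm_mul, norm_neg_mul, norm_neg_mul]
      have h1n : (1:ℝ) ≤ (n:ℝ)+1 := by
        have : (0:ℝ) ≤ (n:ℝ) := Nat.cast_nonneg n
        linarith
      have hz2 : ‖z‖^(n+2) ≤ (ρ*ρ)^(n+2) := pow_le_pow_left₀ ht0 hzs _
      calc ((n:ℝ)+1) * (‖taylorCoef g₁ (n+2)‖ * ‖taylorCoef g₂ (n+2)‖) * ‖z‖^(n+2)
          ≤ ((n:ℝ)+1) * (‖taylorCoef g₁ (n+2)‖ * ‖taylorCoef g₂ (n+2)‖) * (ρ*ρ)^(n+2) := by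
            apply mul_le_mul_of_nonneg_left hz2 (by positivity)
        _ = ((n:ℝ)+1) * (‖taylorCoef g₁ (n+2)‖ * ‖taylorCoef g₂ (n+2)‖) * (ρ^(n+2) * ρ^(n+2)) := by
            rw [← mul_pow]
        _ ≤ ((((n:ℝ)+1) * ‖taylorCoef g₁ (n+2)‖ * ρ^(n+2))^2
              + (((n:ℝ)+1) * ‖taylorCoef g₂ (n+2)‖ * ρ^(n+2))^2)/2 :=
            hamgm _ _ _ _ h1n (norm_nonneg _) (norm_nonneg _) (by positivity)
    have hgABsum : Summable (fun n : ℕ =>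
        ((‖-(((n:ℕ):ℂ)+1) * taylorCoef h₁ (n+2)‖ * ρ^(n+2))^2
          + (‖-(((n:ℕ):ℂ)+1) * taylorCoef h₂ (n+2)‖ * ρ^(n+2))^2)/2) :=
      (hS1a.add hS2a).div_const 2
    have hgBBsum : Summable (fun n : ℕ =>
        ((‖-(((n:ℕ):ℂ)+1) * taylorCoef g₁ (n+2)‖ * ρ^(n+2))^2
          + (‖-(((n:ℕ):ℂ)+1) * taylorCoef g₂ (n+2)‖ * ρ^(n+2))^2)/2) :=
      (hS1b.add hS2b).div_const 2
    have hnsA : Summable (fun n : ℕ =>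
        ‖-(((n:ℕ):ℂ)+1) * (taylorCoef h₁ (n+2) * taylorCoef h₂ (n+2)) * z^(n+2)‖) :=
      Summable.of_nonneg_of_le (fun n => norm_nonneg _) normleA hgABsum
    have hnsB : Summable (fun n : ℕ =>
        ‖-(((n:ℕ):ℂ)+1) * (taylorCoef g₁ (n+2) * taylorCoef g₂ (n+2)) * z^(n+2)‖) :=
      Summable.of_nonneg_of_le (fun n => norm_nonneg _) normleB hgBBsum
    have boundA : ‖∑' n : ℕ, -(((n:ℕ):ℂ)+1) * (taylorCoef h₁ (n+2) * taylorCoef h₂ (n+2)) * z^(n+2)‖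
        ≤ ((∑' n : ℕ, (‖-(((n:ℕ):ℂ)+1) * taylorCoef h₁ (n+2)‖ * ρ^(n+2))^2)
          + ∑' n : ℕ, (‖-(((n:ℕ):ℂ)+1) * taylorCoef h₂ (n+2)‖ * ρ^(n+2))^2)/2 := by
      calc ‖∑' n : ℕ, -(((n:ℕ):ℂ)+1) * (taylorCoef h₁ (n+2) * taylorCoef h₂ (n+2)) * z^(n+2)‖
          ≤ ∑' n : ℕ, ‖-(((n:ℕ):ℂ)+1) * (taylorCoef h₁ (n+2) * taylorCoef h₂ (n+2)) * z^(n+2)‖ :=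
            norm_tsum_le_tsum_norm hnsA
        _ ≤ ∑' n : ℕ, ((‖-(((n:ℕ):ℂ)+1) * taylorCoef h₁ (n+2)‖ * ρ^(n+2))^2
              + (‖-(((n:ℕ):ℂ)+1) * taylorCoef h₂ (n+2)‖ * ρ^(n+2))^2)/2 :=
            Summable.tsum_le_tsum normleA hnsA hgABsum
        _ = ((∑' n : ℕ, (‖-(((n:ℕ):ℂ)+1) * taylorCoef h₁ (n+2)‖ * ρ^(n+2))^2)
              + ∑' n : ℕ, (‖-(((n:ℕ):ℂ)+1) * taylorCoef h₂ (n+2)‖ * ρ^(n+2))^2)/2 := by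
            simp_rw [div_eq_mul_inv]
            rw [tsum_mul_right, Summable.tsum_add hS1a hS2a]
    have boundB : ‖∑' n : ℕ, -(((n:ℕ):ℂ)+1) * (taylorCoef g₁ (n+2) * taylorCoef g₂ (n+2)) * z^(n+2)‖
        ≤ ((∑' n : ℕ, (‖-(((n:ℕ):ℂ)+1) * taylorCoef g₁ (n+2)‖ * ρ^(n+2))^2)
          + ∑' n : ℕ, (‖-(((n:ℕ):ℂ)+1) * taylorCoef g₂ (n+2)‖ * ρ^(n+2))^2)/2 := by
      calc ‖∑' n : ℕ, -(((n:ℕ):ℂ)+1) * (taylorCoef g₁ (n+2) * taylorCoef g₂ (n+2)) * z^(n+2)‖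
          ≤ ∑' n : ℕ, ‖-(((n:ℕ):ℂ)+1) * (taylorCoef g₁ (n+2) * taylorCoef g₂ (n+2)) * z^(n+2)‖ :=
            norm_tsum_le_tsum_norm hnsB
        _ ≤ ∑' n : ℕ, ((‖-(((n:ℕ):ℂ)+1) * taylorCoef g₁ (n+2)‖ * ρ^(n+2))^2
              + (‖-(((n:ℕ):ℂ)+1) * taylorCoef g₂ (n+2)‖ * ρ^(n+2))^2)/2 :=
            Summable.tsum_le_tsum normleB hnsB hgBBsum
        _ = ((∑' n : ℕ, (‖-(((n:ℕ):ℂ)+1) * taylorCoef g₁ (n+2)‖ * ρ^(n+2))^2)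
              + ∑' n : ℕ, (‖-(((n:ℕ):ℂ)+1) * taylorCoef g₂ (n+2)‖ * ρ^(n+2))^2)/2 := by
            simp_rw [div_eq_mul_inv]
            rw [tsum_mul_right, Summable.tsum_add hS1b hS2b]
    have sqlam : ∀ M : ℝ, 0 ≤ M → M < lam → M^2 < lam := by
      intro M h0 hMl
      calc M^2 = M * M := pow_two M
        _ < lam * lam := by
            apply mul_lt_mul'' hMl hMl h0 h0
        _ ≤ lam := mul_le_of_le_one_left hlam0.le hlam
    have hM1sq : M₁^2 < lam := sqlam M₁ hM₁0 hM₁lam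
    have hM2sq : M₂^2 < lam := sqlam M₂ hM₂0 hM₂lam
    linarith only [boundA, boundB, hT1, hT2, hM1sq, hM2sq]
end
end
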